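/- arXiv:1907.11070 — 2 statements merged into one kernel-verified Lean document; each statement's English description precedes it below -/
import Mathlib

section
/- Let n and d be coprime integers with 2 ≤ n < d, and set g = (n−1)(d−1)/2. Then the set of nonnegative integers m ≤ 3g that can be written as m = n·i + d·j with i, j nonnegative integers is exactly the set { n·i + d·j : 0 ≤ j ≤ n−1, 0 ≤ i ≤ ⌊(3g − j·d)/n⌋ }, and this set has exactly 2g + 1 elements. -/
open Finset


/-- Let `n` and `d` be coprime integers with `2 ≤ n < d`, and set
`g = (n−1)(d−1)/2`. Then the set of nonnegative integers `m ≤ 3g` that can be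
written as `m = n·i + d·j` with `i, j` nonnegative integers is exactly the set
`{ n·i + d·j : 0 ≤ j ≤ n−1, 0 ≤ i ≤ ⌊(3g − j·d)/n⌋ }`, and this set has
exactly `2g + 1` elements. -/
theorem first_nongaps_description
    (n d : ℕ) (hcop : Nat.Coprime n d) (hn : 2 ≤ n) (hnd : n < d)
    (g : ℕ) (hg : g = (n - 1) * (d - 1) / 2) :
    {m : ℕ | m ≤ 3 * g ∧ ∃ i j : ℕ, m = n * i + d * j} =
      {m : ℕ | ∃ j : ℕ, j ≤ n - 1 ∧ ∃ i : ℕ, i ≤ (3 * g - j * d) / n ∧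
        m = n * i + d * j} ∧
    {m : ℕ | m ≤ 3 * g ∧ ∃ i j : ℕ, m = n * i + d * j}.ncard = 2 * g + 1 := by
  haveI : NeZero n := ⟨by omega⟩
  have hn0 : 0 < n := by omega
  obtain ⟨a, rfl⟩ : ∃ a, n = a + 2 := ⟨n - 2, by omega⟩
  obtain ⟨b, rfl⟩ : ∃ b, d = b + 3 := ⟨d - 3, by omega⟩
  -- parity of (n-1)(d-1)
  have h2 : ¬ (2 ∣ (a + 2) ∧ 2 ∣ (b + 3)) := by
    rintro ⟨h1, h2⟩
    have := Nat.dvd_gcd h1 h2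
    rw [hcop] at this; omega
  have heven : 2 ∣ (a + 1) * (b + 2) := by
    rcases Nat.even_or_odd (a + 2) with he | ho
    · have hd2 : ¬ 2 ∣ (b + 3) := fun hd => h2 ⟨he.two_dvd, hd⟩
      exact Dvd.dvd.mul_left (by omega) _
    · have hodd : (a + 2) % 2 = 1 := Nat.odd_iff.1 ho
      exact Dvd.dvd.mul_right (by omega) _
  have h2g : 2 * g = (a + 1) * (b + 2) := by
    rw [hg, show (a + 2) - 1 = a + 1 by omega, show (b + 3) - 1 = b + 2 by omega,
      Nat.mul_div_cancel' heven]
  -- key bound: j*d ≤ 3g for j < n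
  have hjd : ∀ j, j < a + 2 → j * (b + 3) ≤ 3 * g := by
    intro j hj
    have h1 : 2 * (j * (b + 3)) ≤ 3 * (2 * g) := by
      rw [h2g]
      have : j ≤ a + 1 := by omega
      nlinarith
    omega
  -- injectivity of j ↦ d*j mod n  (via ZMod)
  have hdu : IsUnit ((b + 3 : ℕ) : ZMod (a + 2)) :=
    (ZMod.isUnit_iff_coprime (b + 3) (a + 2)).2 hcop.symm
  have hcastinj : ∀ j k : ℕ, j < a + 2 → k < a + 2 →
      ((j : ZMod (a + 2)) = (k : ZMod (a + 2))) → j = k := by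
    intro j k hj hk h
    have := (ZMod.natCast_eq_natCast_iff' j k (a + 2)).1 h
    rwa [Nat.mod_eq_of_lt hj, Nat.mod_eq_of_lt hk] at this
  have hdj : ∀ i j i' k : ℕ, j < a + 2 → k < a + 2 →
      (a + 2) * i + (b + 3) * j = (a + 2) * i' + (b + 3) * k → j = k := by
    intro i j i' k hj hk h
    have h1 : (((a + 2) * i + (b + 3) * j : ℕ) : ZMod (a + 2)) =
        (((a + 2) * i' + (b + 3) * k : ℕ) : ZMod (a + 2)) := by rw [h]
    rw [Nat.cast_add, Nat.cast_add, Nat.cast_mul, Nat.cast_mul, Nat.cast_mul, Nat.cast_mul,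
      ZMod.natCast_self, zero_mul, zero_mul, zero_add, zero_add] at h1
    exact hcastinj j k hj hk (hdu.mul_left_cancel h1)
  -- part 1: set equality
  have hset : {m : ℕ | m ≤ 3 * g ∧ ∃ i j : ℕ, m = (a + 2) * i + (b + 3) * j} =
      {m : ℕ | ∃ j : ℕ, j ≤ (a + 2) - 1 ∧ ∃ i : ℕ, i ≤ (3 * g - j * (b + 3)) / (a + 2) ∧
        m = (a + 2) * i + (b + 3) * j} := by
    ext m
    simp only [Set.mem_setOf_eq]
    constructor
    · rintro ⟨hle, i, j, rfl⟩
      obtain ⟨q, r, hr, rfl⟩ : ∃ q r, r < a + 2 ∧ j = (a + 2) * q + r :=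
        ⟨j / (a + 2), j % (a + 2), Nat.mod_lt _ hn0, (Nat.div_add_mod j (a + 2)).symm⟩
      refine ⟨r, by omega, i + (b + 3) * q, ?_, by ring⟩
      have hX : (a + 2) * (i + (b + 3) * q) + (b + 3) * r ≤ 3 * g := by
        calc (a + 2) * (i + (b + 3) * q) + (b + 3) * r
            = (a + 2) * i + (b + 3) * ((a + 2) * q + r) := by ring
          _ ≤ 3 * g := hle
      have h1 : (i + (b + 3) * q) * (a + 2) ≤ 3 * g - r * (b + 3) := by
        rw [mul_comm]
        refine Nat.le_sub_of_add_le ?_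
        rw [mul_comm r (b + 3)]
        exact hX
      exact (Nat.le_div_iff_mul_le hn0).2 h1
    · rintro ⟨j, hj, i, hi, rfl⟩
      have hj' : j < a + 2 := by omega
      have h1 : (a + 2) * i ≤ 3 * g - j * (b + 3) := by
        calc (a + 2) * i ≤ (a + 2) * ((3 * g - j * (b + 3)) / (a + 2)) :=
              Nat.mul_le_mul_left _ hi
          _ ≤ 3 * g - j * (b + 3) := Nat.mul_div_le _ _
      refine ⟨?_, i, j, rfl⟩
      have h2 := hjd j hj'
      have h3 : (b + 3) * j = j * (b + 3) := mul_comm _ _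
      omega
  refine ⟨hset, ?_⟩
  -- part 2: cardinality
  set N := 3 * g with hN
  set S : Finset ℕ := (range (a + 2)).biUnion
    (fun j => (range ((N - j * (b + 3)) / (a + 2) + 1)).image
      (fun i => (a + 2) * i + (b + 3) * j)) with hS
  have hsetS : {m : ℕ | m ≤ 3 * g ∧ ∃ i j : ℕ, m = (a + 2) * i + (b + 3) * j} = ↑S := by
    rw [hset]
    ext m
    simp only [Set.mem_setOf_eq, hS, Finset.coe_biUnion, Set.mem_iUnion,
      Finset.mem_coe, Finset.mem_image, Finset.mem_range]
    constructor
    · rintro ⟨j, hj, i, hi, rfl⟩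
      exact ⟨j, by omega, i, by omega, rfl⟩
    · rintro ⟨j, hj, i, hi, rfl⟩
      exact ⟨j, by omega, i, by omega, rfl⟩
  rw [hsetS, Set.ncard_coe_finset]
  -- disjointness
  have hdisj : ∀ j ∈ range (a + 2), ∀ k ∈ range (a + 2), j ≠ k →
      Disjoint ((range ((N - j * (b + 3)) / (a + 2) + 1)).image
        (fun i => (a + 2) * i + (b + 3) * j))
      ((range ((N - k * (b + 3)) / (a + 2) + 1)).image
        (fun i => (a + 2) * i + (b + 3) * k)) := by
    intro j hj k hk hne
    rw [Finset.disjoint_left]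
    rintro m hm hm'
    simp only [Finset.mem_image, Finset.mem_range] at hm hm'
    obtain ⟨i, _, rfl⟩ := hm
    obtain ⟨i', _, he⟩ := hm'
    exact hne (hdj i j i' k (mem_range.1 hj) (mem_range.1 hk) he.symm)
  rw [hS, Finset.card_biUnion hdisj]
  have hcard : ∀ j, ((range ((N - j * (b + 3)) / (a + 2) + 1)).image
      (fun i => (a + 2) * i + (b + 3) * j)).card = (N - j * (b + 3)) / (a + 2) + 1 := by
    intro j
    rw [Finset.card_image_of_injective, Finset.card_range]
    intro i i' h
    simp only at h
    exact Nat.eq_of_mul_eq_mul_left hn0 (by omega)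
  simp only [hcard]
  -- sum of mods equals sum of range via injectivity
  have hinjmod : ∀ j ∈ range (a + 2), ∀ k ∈ range (a + 2),
      (N - j * (b + 3)) % (a + 2) = (N - k * (b + 3)) % (a + 2) → j = k := by
    intro j hj k hk h
    rw [mem_range] at hj hk
    have h1 : ((N - j * (b + 3) : ℕ) : ZMod (a + 2)) =
        ((N - k * (b + 3) : ℕ) : ZMod (a + 2)) := by
      rw [ZMod.natCast_eq_natCast_iff']
      exact h
    rw [Nat.cast_sub (hjd j hj), Nat.cast_sub (hjd k hk)] at h1
    have h2 : ((j * (b + 3) : ℕ) : ZMod (a + 2)) = ((k * (b + 3) : ℕ) : ZMod (a + 2)) :=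
      sub_right_injective h1
    rw [Nat.cast_mul, Nat.cast_mul, mul_comm (j : ZMod (a + 2)), mul_comm (k : ZMod (a + 2))] at h2
    exact hcastinj j k hj hk (hdu.mul_left_cancel h2)
  have himg : (range (a + 2)).image (fun j => (N - j * (b + 3)) % (a + 2)) = range (a + 2) := by
    apply Finset.eq_of_subset_of_card_le
    · intro r hr
      simp only [Finset.mem_image, Finset.mem_range] at hr ⊢
      obtain ⟨j, _, rfl⟩ := hr
      exact Nat.mod_lt _ hn0
    · rw [Finset.card_image_of_injOn hinjmod, Finset.card_range]
  have hR : ∑ j ∈ range (a + 2), (N - j * (b + 3)) % (a + 2) = ∑ j ∈ range (a + 2), j := by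
    conv_rhs => rw [← himg]
    rw [Finset.sum_image hinjmod]
  set T := ∑ j ∈ range (a + 2), j with hTdef
  set Q := ∑ j ∈ range (a + 2), (N - j * (b + 3)) / (a + 2) with hQdef
  have hT2 : T * 2 = (a + 2) * (a + 1) := by
    rw [hTdef, Finset.sum_range_id_mul_two]
    congr 1
  -- key equation: (a+2)*Q + T + T*(b+3) = (a+2)*N
  have hA : (∑ j ∈ range (a + 2), (N - j * (b + 3))) + T * (b + 3) = (a + 2) * N := by
    have h1 : ∑ j ∈ range (a + 2), ((N - j * (b + 3)) + j * (b + 3)) =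
        ∑ _j ∈ range (a + 2), N :=
      Finset.sum_congr rfl (fun j hj => by
        rw [Nat.sub_add_cancel (hjd j (mem_range.1 hj))])
    rw [Finset.sum_add_distrib, ← Finset.sum_mul, Finset.sum_const, Finset.card_range,
      smul_eq_mul] at h1
    exact h1
  have hB : ∑ j ∈ range (a + 2), (N - j * (b + 3)) = (a + 2) * Q + T := by
    have h1 : ∑ j ∈ range (a + 2), (N - j * (b + 3)) =
        ∑ j ∈ range (a + 2), ((a + 2) * ((N - j * (b + 3)) / (a + 2)) +
          (N - j * (b + 3)) % (a + 2)) :=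
      Finset.sum_congr rfl (fun j _ => (Nat.div_add_mod _ _).symm)
    rw [h1, Finset.sum_add_distrib, ← Finset.mul_sum, hR]
  have hkey : (a + 2) * Q + T + T * (b + 3) = (a + 2) * N := by
    rw [← hB]; exact hA
  -- solve for Q
  have hcancel : (a + 2) * (2 * Q + (a + 1) * (b + 4)) = (a + 2) * (2 * N) := by
    calc (a + 2) * (2 * Q + (a + 1) * (b + 4))
        = 2 * ((a + 2) * Q) + ((a + 2) * (a + 1)) * (b + 4) := by ring
      _ = 2 * ((a + 2) * Q) + (T * 2) * (b + 4) := by rw [hT2]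
      _ = 2 * ((a + 2) * Q + T + T * (b + 3)) := by ring
      _ = 2 * ((a + 2) * N) := by rw [hkey]
      _ = (a + 2) * (2 * N) := by ring
  have hQval : 2 * Q + (a + 1) * (b + 4) = 2 * N := Nat.eq_of_mul_eq_mul_left (by omega) hcancel
  have hN2 : 2 * N = 3 * ((a + 1) * (b + 2)) := by rw [hN]; omega
  -- conclude
  rw [Finset.sum_add_distrib, ← hQdef, Finset.sum_const, Finset.card_range, smul_eq_mul,
    mul_one]
  -- goal : Q + (a + 2) = 2 * g + 1
  rw [hN2] at hQval
  nlinarith [hQval, h2g]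
end

section
/- Let n and d be coprime positive integers. Then the number of nonnegative integers that cannot be written as n·i + d·j with i, j nonnegative integers is exactly (n−1)(d−1)/2. -/
private lemma syl_c_not_rep (n d : ℕ) (hn : 2 ≤ n) (hd : 2 ≤ d) (hcop : Nat.Coprime n d) :
    ¬ ∃ a b : ℤ, 0 ≤ a ∧ 0 ≤ b ∧ (n:ℤ)*d - n - d = n*a + d*b := by
  rintro ⟨a, b, ha, hb, h⟩
  have hdvd : (d:ℤ) ∣ (n:ℤ) * (a+1) := ⟨(n:ℤ) - 1 - b, by ring_nf; ring_nf at h; linarith⟩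
  have hco : IsCoprime (d:ℤ) (n:ℤ) := by
    rw [Int.isCoprime_iff_gcd_eq_one, Int.gcd_natCast_natCast]
    exact hcop.symm
  have hdvd2 : (d:ℤ) ∣ (a+1) := hco.dvd_of_dvd_mul_left hdvd
  have hle : (d:ℤ) ≤ a + 1 := Int.le_of_dvd (by omega) hdvd2
  have hnn : (2:ℤ) ≤ (n:ℤ) := by exact_mod_cast hn
  nlinarith

private lemma syl_rep_sub (n d : ℕ) (hn : 2 ≤ n) (hd : 2 ≤ d) (hcop : Nat.Coprime n d)
    (m : ℤ) (h : ¬ ∃ a b : ℤ, 0 ≤ a ∧ 0 ≤ b ∧ m = n*a + d*b) :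
    ∃ a b : ℤ, 0 ≤ a ∧ 0 ≤ b ∧ (n:ℤ)*d - n - d - m = n*a + d*b := by
  have hdpos : (0:ℤ) < d := by exact_mod_cast (by omega : 0 < d)
  obtain ⟨x, y, hxy⟩ : ∃ x y : ℤ, m = n*x + d*y := by
    have hg : Int.gcd (n:ℤ) d = 1 := by rw [Int.gcd_natCast_natCast]; exact hcop
    refine ⟨m * Int.gcdA n d, m * Int.gcdB n d, ?_⟩
    have hb := Int.gcd_eq_gcd_ab (n:ℤ) (d:ℤ)
    rw [hg] at hb
    push_cast at hb
    linear_combination m * hb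
  set a := x % d with ha
  have ha0 : 0 ≤ a := Int.emod_nonneg x (by omega)
  have had : a < d := Int.emod_lt_of_pos x hdpos
  have hx' : x = d * (x / d) + a := by
    have h1 := Int.mul_ediv_add_emod x d
    linarith
  have hm : m = (n:ℤ)*a + d*((n:ℤ)*(x/d) + y) := by
    rw [hxy]
    linear_combination (n:ℤ) * hx'
  by_cases hb : 0 ≤ (n:ℤ)*(x/d) + y
  · exact absurd ⟨a, _, ha0, hb, hm⟩ h
  · push_neg at hb
    refine ⟨d - 1 - a, -1 - ((n:ℤ)*(x/d)+y), by omega, by omega, ?_⟩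
    linear_combination (-1:ℤ) * hm

private lemma syl_sym (n d : ℕ) (hn : 2 ≤ n) (hd : 2 ≤ d) (hcop : Nat.Coprime n d) (m : ℤ) :
    (∃ a b : ℤ, 0 ≤ a ∧ 0 ≤ b ∧ m = n*a + d*b)
      ↔ ¬ (∃ a b : ℤ, 0 ≤ a ∧ 0 ≤ b ∧ (n:ℤ)*d - n - d - m = n*a + d*b) := by
  constructor
  · rintro ⟨a, b, ha, hb, hab⟩ ⟨a', b', ha', hb', hab'⟩
    exact syl_c_not_rep n d hn hd hcop
      ⟨a + a', b + b', by omega, by omega, by linear_combination hab + hab'⟩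
  · intro h
    by_contra hm
    exact h (syl_rep_sub n d hn hd hcop m hm)

/-- Sylvester: Let `n` and `d` be coprime positive integers.
Then the number of nonnegative integers that cannot be written as
`n·i + d·j` with `i, j` nonnegative integers is exactly `(n−1)(d−1)/2`. -/
theorem sylvester_count_of_gaps
    (n d : ℕ) (hn : 0 < n) (hd : 0 < d) (hcop : Nat.Coprime n d) :
    {m : ℕ | ¬ ∃ i j : ℕ, m = n * i + d * j}.ncard = (n - 1) * (d - 1) / 2 := by
  classical
  rcases Nat.lt_or_ge n 2 with h1 | hn2
  · obtain rfl : n = 1 := by omega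
    have he : {m : ℕ | ¬ ∃ i j : ℕ, m = 1 * i + d * j} = ∅ := by
      ext m
      simp only [Set.mem_setOf_eq, Set.mem_empty_iff_false, iff_false, not_not]
      exact ⟨m, 0, by ring⟩
    rw [he]; simp
  rcases Nat.lt_or_ge d 2 with h2 | hd2
  · obtain rfl : d = 1 := by omega
    have he : {m : ℕ | ¬ ∃ i j : ℕ, m = n * i + 1 * j} = ∅ := by
      ext m
      simp only [Set.mem_setOf_eq, Set.mem_empty_iff_false, iff_false, not_not]
      exact ⟨0, m, by ring⟩
    rw [he]; simp
  -- main case : n, d ≥ 2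
  have hnd : n + d ≤ n * d := by nlinarith
  obtain ⟨c, hc⟩ : ∃ c, c + (n + d) = n * d := ⟨n*d - (n+d), by omega⟩
  have hcz : (c:ℤ) = (n:ℤ)*d - n - d := by
    have := congrArg (Nat.cast : ℕ → ℤ) hc
    push_cast at this
    linarith
  have bridge : ∀ m : ℕ, (∃ i j : ℕ, m = n*i + d*j)
      ↔ (∃ a b : ℤ, 0 ≤ a ∧ 0 ≤ b ∧ (m:ℤ) = n*a + d*b) := by
    intro m
    constructor
    · rintro ⟨i, j, rfl⟩
      exact ⟨i, j, Int.natCast_nonneg i, Int.natCast_nonneg j, by push_cast; ring⟩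
    · rintro ⟨a, b, ha, hb, hab⟩
      lift a to ℕ using ha
      lift b to ℕ using hb
      exact ⟨a, b, by exact_mod_cast hab⟩
  have gap_le : ∀ m : ℕ, ¬(∃ i j : ℕ, m = n*i + d*j) → m ≤ c := by
    intro m hm
    have h1 : ¬(∃ a b : ℤ, 0 ≤ a ∧ 0 ≤ b ∧ (m:ℤ) = n*a + d*b) :=
      fun h => hm ((bridge m).2 h)
    have h2 : ∃ a b : ℤ, 0 ≤ a ∧ 0 ≤ b ∧ (n:ℤ)*d - n - d - m = n*a + d*b := by
      by_contra hB
      exact h1 ((syl_sym n d hn2 hd2 hcop m).2 hB)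
    obtain ⟨a, b, ha, hb, hab⟩ := h2
    have hna : (0:ℤ) ≤ (n:ℤ)*a := mul_nonneg (by positivity) ha
    have hdb : (0:ℤ) ≤ (d:ℤ)*b := mul_nonneg (by positivity) hb
    have : (m:ℤ) ≤ (c:ℤ) := by rw [hcz]; linarith
    exact_mod_cast this
  have hset : {m : ℕ | ¬ ∃ i j : ℕ, m = n*i + d*j}
      = ↑((Finset.range (c+1)).filter (fun m => ¬ ∃ i j : ℕ, m = n*i + d*j)) := by
    ext m
    simp only [Set.mem_setOf_eq, Finset.coe_filter, Finset.mem_range, Set.mem_setOf_eq]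
    constructor
    · intro h; exact ⟨Nat.lt_succ_of_le (gap_le m h), h⟩
    · exact fun h => h.2
  rw [hset, Set.ncard_coe_finset]
  have hcard : ((Finset.range (c+1)).filter (fun m => ¬ ∃ i j : ℕ, m = n*i + d*j)).card
      = ((Finset.range (c+1)).filter (fun m => ∃ i j : ℕ, m = n*i + d*j)).card := by
    apply Finset.card_bij (fun m _ => c - m)
    · intro m hm
      simp only [Finset.mem_filter, Finset.mem_range] at hm ⊢
      obtain ⟨hmlt, hmgap⟩ := hm
      refine ⟨by omega, ?_⟩
      have h1 : ¬(∃ a b : ℤ, 0 ≤ a ∧ 0 ≤ b ∧ (m:ℤ) = n*a + d*b) :=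
        fun h => hmgap ((bridge m).2 h)
      have h2 : ∃ a b : ℤ, 0 ≤ a ∧ 0 ≤ b ∧ (n:ℤ)*d - n - d - m = n*a + d*b := by
        by_contra hB
        exact h1 ((syl_sym n d hn2 hd2 hcop m).2 hB)
      apply (bridge (c-m)).2
      have hmc : m ≤ c := by omega
      have hcast : ((c - m : ℕ) : ℤ) = (n:ℤ)*d - n - d - m := by
        rw [Nat.cast_sub hmc, hcz]
      rw [hcast]
      exact h2
    · intro m1 h1 m2 h2 heq
      simp only [Finset.mem_filter, Finset.mem_range] at h1 h2
      omega
    · intro m' hm'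
      simp only [Finset.mem_filter, Finset.mem_range] at hm'
      obtain ⟨hlt, hrep⟩ := hm'
      refine ⟨c - m', ?_, by omega⟩
      simp only [Finset.mem_filter, Finset.mem_range]
      refine ⟨by omega, ?_⟩
      intro hcontra
      have hA := (bridge m').1 hrep
      have hB := (syl_sym n d hn2 hd2 hcop (m':ℤ)).1 hA
      apply hB
      have h3 := (bridge (c - m')).1 hcontra
      have hmc : m' ≤ c := by omega
      have hcast : ((c - m' : ℕ) : ℤ) = (n:ℤ)*d - n - d - m' := by
        rw [Nat.cast_sub hmc, hcz]
      rwa [hcast] at h3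
  have htot := Finset.card_filter_add_card_filter_not
    (s := Finset.range (c+1)) (p := fun m => ∃ i j : ℕ, m = n*i + d*j)
  rw [Finset.card_range] at htot
  have hprod : c + 1 = (n-1)*(d-1) := by
    obtain ⟨a, rfl⟩ : ∃ a, n = a + 2 := ⟨n - 2, by omega⟩
    obtain ⟨b, rfl⟩ : ∃ b, d = b + 2 := ⟨d - 2, by omega⟩
    have e1 : a + 2 - 1 = a + 1 := by omega
    have e2 : b + 2 - 1 = b + 1 := by omega
    rw [e1, e2]
    have hx1 : (a+2)*(b+2) = a*b + 2*a + 2*b + 4 := by ring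
    have hx2 : (a+1)*(b+1) = a*b + a + b + 1 := by ring
    omega
  rw [← hprod]
  omega
end
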